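/- arXiv:2007.15670 — 7 statements merged into one kernel-verified Lean document; each statement's English description precedes it below -/
import Mathlib

section
/- If sequences a, b, c : N -> Z all satisfy the recurrence u(n+3) = 82*u(n+2) + 82*u(n+1) - u(n), and if a(n)^3 + b(n)^3 - c(n)^3 - (-1)^n = 0 holds for n = 0, 1, 2, 3, 4, 5, 6, then it holds for all n. -/
lemma cube_rec7 (u : ℕ → ℤ)
    (hu : ∀ n, u (n + 3) = 82 * u (n + 2) + 82 * u (n + 1) - u n) (n : ℕ) :
    u (n + 7) ^ 3 = 564733 * u (n + 6) ^ 3 + 3889880904 * u (n + 5) ^ 3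
      - 322812677460 * u (n + 4) ^ 3 - 322812677460 * u (n + 3) ^ 3
      + 3889880904 * u (n + 2) ^ 3 + 564733 * u (n + 1) ^ 3 - u n ^ 3 := by
  have h3 : u (n + 3) = 82 * u (n + 2) + 82 * u (n + 1) - u n := hu n
  have h4 : u (n + 4) = 82 * u (n + 3) + 82 * u (n + 2) - u (n + 1) := hu (n + 1)
  have h5 : u (n + 5) = 82 * u (n + 4) + 82 * u (n + 3) - u (n + 2) := hu (n + 2)
  have h6 : u (n + 6) = 82 * u (n + 5) + 82 * u (n + 4) - u (n + 3) := hu (n + 3)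
  have h7 : u (n + 7) = 82 * u (n + 6) + 82 * u (n + 5) - u (n + 4) := hu (n + 4)
  rw [h7, h6, h5, h4, h3]
  ring

lemma negpow_rec7 (n : ℕ) :
    ((-1 : ℤ)) ^ (n + 7) = 564733 * (-1 : ℤ) ^ (n + 6) + 3889880904 * (-1 : ℤ) ^ (n + 5)
      - 322812677460 * (-1 : ℤ) ^ (n + 4) - 322812677460 * (-1 : ℤ) ^ (n + 3)
      + 3889880904 * (-1 : ℤ) ^ (n + 2) + 564733 * (-1 : ℤ) ^ (n + 1) - (-1 : ℤ) ^ n := by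
  simp only [pow_add]
  ring

theorem stmt3 (a b c : ℕ → ℤ)
    (ha : ∀ n, a (n + 3) = 82 * a (n + 2) + 82 * a (n + 1) - a n)
    (hb : ∀ n, b (n + 3) = 82 * b (n + 2) + 82 * b (n + 1) - b n)
    (hc : ∀ n, c (n + 3) = 82 * c (n + 2) + 82 * c (n + 1) - c n)
    (hcheck : ∀ n ≤ 6, a n ^ 3 + b n ^ 3 - c n ^ 3 - (-1) ^ n = 0) :
    ∀ n, a n ^ 3 + b n ^ 3 - c n ^ 3 - (-1) ^ n = 0 := by
  have key : ∀ n : ℕ,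
      a (n + 7) ^ 3 + b (n + 7) ^ 3 - c (n + 7) ^ 3 - (-1) ^ (n + 7)
        = 564733 * (a (n + 6) ^ 3 + b (n + 6) ^ 3 - c (n + 6) ^ 3 - (-1) ^ (n + 6))
        + 3889880904 * (a (n + 5) ^ 3 + b (n + 5) ^ 3 - c (n + 5) ^ 3 - (-1) ^ (n + 5))
        - 322812677460 * (a (n + 4) ^ 3 + b (n + 4) ^ 3 - c (n + 4) ^ 3 - (-1) ^ (n + 4))
        - 322812677460 * (a (n + 3) ^ 3 + b (n + 3) ^ 3 - c (n + 3) ^ 3 - (-1) ^ (n + 3))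
        + 3889880904 * (a (n + 2) ^ 3 + b (n + 2) ^ 3 - c (n + 2) ^ 3 - (-1) ^ (n + 2))
        + 564733 * (a (n + 1) ^ 3 + b (n + 1) ^ 3 - c (n + 1) ^ 3 - (-1) ^ (n + 1))
        - (a n ^ 3 + b n ^ 3 - c n ^ 3 - (-1) ^ n) := by
    intro n
    linear_combination cube_rec7 a ha n + cube_rec7 b hb n - cube_rec7 c hc n - negpow_rec7 n
  have main : ∀ n : ℕ, ∀ i ≤ 6,
      a (n + i) ^ 3 + b (n + i) ^ 3 - c (n + i) ^ 3 - (-1) ^ (n + i) = 0 := by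
    intro n
    induction n with
    | zero =>
        intro i hi
        simpa using hcheck i hi
    | succ n ih =>
        intro i hi
        rcases Nat.lt_or_ge i 6 with h | h
        · have := ih (i + 1) (by omega)
          rw [show n + 1 + i = n + (i + 1) by omega]
          exact this
        · have h6 : i = 6 := by omega
          subst h6
          have h0 := ih 0 (by norm_num)
          have h1 := ih 1 (by norm_num)
          have h2 := ih 2 (by norm_num)
          have h3 := ih 3 (by norm_num)
          have h4 := ih 4 (by norm_num)
          have h5 := ih 5 (by norm_num)
          have h6 := ih 6 (by norm_num)
          simp only [Nat.add_zero] at h0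
          rw [show n + 1 + 6 = n + 7 by omega, key n, h0, h1, h2, h3, h4, h5, h6]
          ring
  intro n
  simpa using main n 0 (by norm_num)
end

section
/- Let c0, c1, d0, d1, k be integers and define integer sequences a, b by a(0)=c0, a(1)=c0*k+c1, a(n+2)=k*a(n+1)-a(n), and b(0)=d0, b(1)=d0*k+d1, b(n+2)=k*b(n+1)-b(n). Let D = c0*d1 - c1*d0. Then for all n: D^2*(d0*d1*k + d0^2 + d1^2)*a(n)^2 - D^2*(c0*d1*k + c1*d0*k + 2*c0*d0 + 2*c1*d1)*a(n)*b(n) + D^2*(c0*c1*k + c0^2 + c1^2)*b(n)^2 = D^4. -/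
private def cheb (k : ℤ) : ℕ → ℤ
  | 0 => 0
  | 1 => 1
  | (n + 2) => k * cheb k (n + 1) - cheb k n

private lemma cheb_inv (k : ℤ) : ∀ n,
    cheb k (n + 1) ^ 2 - k * cheb k n * cheb k (n + 1) + cheb k n ^ 2 = 1 := by
  intro n
  induction n with
  | zero => simp [cheb]
  | succ m ih =>
    show cheb k (m + 2) ^ 2 - k * cheb k (m + 1) * cheb k (m + 2) + cheb k (m + 1) ^ 2 = 1
    rw [show cheb k (m + 2) = k * cheb k (m + 1) - cheb k m from rfl]
    linear_combination ih

private lemma cheb_rep (k x0 x1 : ℤ) (x : ℕ → ℤ) (h0 : x 0 = x0)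
    (h1 : x 1 = x0 * k + x1) (h : ∀ n, x (n + 2) = k * x (n + 1) - x n) :
    ∀ n, x n = x0 * cheb k (n + 1) + x1 * cheb k n := by
  have key : ∀ n, x n = x0 * cheb k (n + 1) + x1 * cheb k n ∧
      x (n + 1) = x0 * cheb k (n + 2) + x1 * cheb k (n + 1) := by
    intro n
    induction n with
    | zero =>
      constructor
      · simp [cheb, h0]
      · rw [h1, show cheb k 2 = k * cheb k 1 - cheb k 0 from rfl]
        simp [cheb]
    | succ m ih =>
      refine ⟨ih.2, ?_⟩
      rw [h m, ih.1, ih.2, show cheb k (m + 3) = k * cheb k (m + 2) - cheb k (m + 1) from rfl,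
        show cheb k (m + 2) = k * cheb k (m + 1) - cheb k m from rfl]
      ring
  exact fun n => (key n).1

theorem stmt8 (c0 c1 d0 d1 k : ℤ) (a b : ℕ → ℤ)
    (ha0 : a 0 = c0) (ha1 : a 1 = c0 * k + c1)
    (ha : ∀ n, a (n + 2) = k * a (n + 1) - a n)
    (hb0 : b 0 = d0) (hb1 : b 1 = d0 * k + d1)
    (hb : ∀ n, b (n + 2) = k * b (n + 1) - b n) :
    ∀ n, (c0*d1 - c1*d0)^2 * (d0*d1*k + d0^2 + d1^2) * a n ^ 2
      - (c0*d1 - c1*d0)^2 * (c0*d1*k + c1*d0*k + 2*c0*d0 + 2*c1*d1) * a n * b n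
      + (c0*d1 - c1*d0)^2 * (c0*c1*k + c0^2 + c1^2) * b n ^ 2
      = (c0*d1 - c1*d0)^4 := by
  intro n
  rw [cheb_rep k c0 c1 a ha0 ha1 ha n, cheb_rep k d0 d1 b hb0 hb1 hb n]
  linear_combination (c0*d1 - c1*d0)^4 * cheb_inv k n
end

section
/- Let a, b be integers and suppose (x,y,z,w) and (x',y',z',w') are integer quadruples with a*x^3 + a*y^3 + b*z^3 + b*w^3 = 0 and a*x'^3 + a*y'^3 + b*z'^3 + b*w'^3 = 0. Set c = a*x'^2*x + a*y'^2*y + b*z'^2*z + b*w'^2*w and d = -(a*x^2*x' + a*y^2*y' + b*z^2*z' + b*w^2*w'). Then (c*x + d*x', c*y + d*y', c*z + d*z', c*w + d*w') is also a solution: a*(c*x+d*x')^3 + a*(c*y+d*y')^3 + b*(c*z+d*z')^3 + b*(c*w+d*w')^3 = 0. -/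
theorem stmt11 (a b x y z w x' y' z' w' : ℤ)
    (h1 : a*x^3 + a*y^3 + b*z^3 + b*w^3 = 0)
    (h2 : a*x'^3 + a*y'^3 + b*z'^3 + b*w'^3 = 0)
    (c d : ℤ)
    (hc : c = a*x'^2*x + a*y'^2*y + b*z'^2*z + b*w'^2*w)
    (hd : d = -(a*x^2*x' + a*y^2*y' + b*z^2*z' + b*w^2*w')) :
    a*(c*x + d*x')^3 + a*(c*y + d*y')^3 + b*(c*z + d*z')^3
      + b*(c*w + d*w')^3 = 0 := by
  subst hc hd
  linear_combination (a*x'^2*x + a*y'^2*y + b*z'^2*z + b*w'^2*w)^3 * h1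
    + (-(a*x^2*x' + a*y^2*y' + b*z^2*z' + b*w^2*w'))^3 * h2
end

section
/- Suppose (x,y,z,w) and (x',y',z',w') are integer quadruples with x^3+y^3+z^3+w^3 = 0 and x'^3+y'^3+z'^3+w'^3 = 0. Set c = x'^2*x + y'^2*y + z'^2*z + w'^2*w and d = -(x^2*x' + y^2*y' + z^2*z' + w^2*w'). Then (c*x+d*x')^3 + (c*y+d*y')^3 + (c*z+d*z')^3 + (c*w+d*w')^3 = 0. -/
theorem stmt12 (x y z w x' y' z' w' : ℤ)
    (h1 : x^3 + y^3 + z^3 + w^3 = 0)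
    (h2 : x'^3 + y'^3 + z'^3 + w'^3 = 0)
    (c d : ℤ)
    (hc : c = x'^2*x + y'^2*y + z'^2*z + w'^2*w)
    (hd : d = -(x^2*x' + y^2*y' + z^2*z' + w^2*w')) :
    (c*x + d*x')^3 + (c*y + d*y')^3 + (c*z + d*z')^3 + (c*w + d*w')^3 = 0 := by
  subst hc hd
  linear_combination (x'^2*x + y'^2*y + z'^2*z + w'^2*w)^3 * h1 +
    (-(x^2*x' + y^2*y' + z^2*z' + w^2*w'))^3 * h2
end

section
/- Define integer sequences a, b, c as the coefficient sequences of (293155t^2 + 888826t - 29)/((1-t)(t^2-103682t+1)), -(237169t^2 + 550798t + 1)/((1-t)(t^2-103682t+1)), and (90601t^2 - 878594t + 25)/((1-t)(t^2-103682t+1)) respectively, so that they satisfy the common recurrence u(n+3) = 103683*u(n+2) - 103683*u(n+1) + u(n). Then for all n: a(n)^3 + 2*b(n)^3 + 2*c(n)^3 = 6859. -/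
private lemma key14 (a b c : ℕ → ℤ)
    (ha : ∀ n, a (n + 3) = 103683 * a (n + 2) - 103683 * a (n + 1) + a n)
    (hb : ∀ n, b (n + 3) = 103683 * b (n + 2) - 103683 * b (n + 1) + b n)
    (hc : ∀ n, c (n + 3) = 103683 * c (n + 2) - 103683 * c (n + 1) + c n)
    (n : ℕ) : a (n + 7) ^ 3 + 2 * b (n + 7) ^ 3 + 2 * c (n + 7) ^ 3 =
    1114587804280327 * (a (n + 6) ^ 3 + 2 * b (n + 6) ^ 3 + 2 * c (n + 6) ^ 3) - 11981771105832231122419221 * (a (n + 5) ^ 3 + 2 * b (n + 5) ^ 3 + 2 * c (n + 5) ^ 3) + 1242293991679335809099081088035 * (a (n + 4) ^ 3 + 2 * b (n + 4) ^ 3 + 2 * c (n + 4) ^ 3) - 1242293991679335809099081088035 * (a (n + 3) ^ 3 + 2 * b (n + 3) ^ 3 + 2 * c (n + 3) ^ 3) + 11981771105832231122419221 * (a (n + 2) ^ 3 + 2 * b (n + 2) ^ 3 + 2 * c (n + 2) ^ 3) - 1114587804280327 * (a (n + 1) ^ 3 + 2 * b (n + 1) ^ 3 + 2 * c (n + 1)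 ^ 3) + (a n ^ 3 + 2 * b n ^ 3 + 2 * c n ^ 3) := by
  have ea4 := ha (n + 4)
  have : n + 4 + 3 = n + 7 := by omega
  rw [this] at ea4
  have : n + 4 + 2 = n + 6 := by omega
  rw [this] at ea4
  have : n + 4 + 1 = n + 5 := by omega
  rw [this] at ea4
  have eb4 := hb (n + 4)
  have : n + 4 + 3 = n + 7 := by omega
  rw [this] at eb4
  have : n + 4 + 2 = n + 6 := by omega
  rw [this] at eb4
  have : n + 4 + 1 = n + 5 := by omega
  rw [this] at eb4
  have ec4 := hc (n + 4)
  have : n + 4 + 3 = n + 7 := by omega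
  rw [this] at ec4
  have : n + 4 + 2 = n + 6 := by omega
  rw [this] at ec4
  have : n + 4 + 1 = n + 5 := by omega
  rw [this] at ec4
  have ea3 := ha (n + 3)
  have : n + 3 + 3 = n + 6 := by omega
  rw [this] at ea3
  have : n + 3 + 2 = n + 5 := by omega
  rw [this] at ea3
  have : n + 3 + 1 = n + 4 := by omega
  rw [this] at ea3
  have eb3 := hb (n + 3)
  have : n + 3 + 3 = n + 6 := by omega
  rw [this] at eb3
  have : n + 3 + 2 = n + 5 := by omega
  rw [this] at eb3
  have : n + 3 + 1 = n + 4 := by omega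
  rw [this] at eb3
  have ec3 := hc (n + 3)
  have : n + 3 + 3 = n + 6 := by omega
  rw [this] at ec3
  have : n + 3 + 2 = n + 5 := by omega
  rw [this] at ec3
  have : n + 3 + 1 = n + 4 := by omega
  rw [this] at ec3
  have ea2 := ha (n + 2)
  have : n + 2 + 3 = n + 5 := by omega
  rw [this] at ea2
  have : n + 2 + 2 = n + 4 := by omega
  rw [this] at ea2
  have : n + 2 + 1 = n + 3 := by omega
  rw [this] at ea2
  have eb2 := hb (n + 2)
  have : n + 2 + 3 = n + 5 := by omega
  rw [this] at eb2
  have : n + 2 + 2 = n + 4 := by omega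
  rw [this] at eb2
  have : n + 2 + 1 = n + 3 := by omega
  rw [this] at eb2
  have ec2 := hc (n + 2)
  have : n + 2 + 3 = n + 5 := by omega
  rw [this] at ec2
  have : n + 2 + 2 = n + 4 := by omega
  rw [this] at ec2
  have : n + 2 + 1 = n + 3 := by omega
  rw [this] at ec2
  have ea1 := ha (n + 1)
  have : n + 1 + 3 = n + 4 := by omega
  rw [this] at ea1
  have : n + 1 + 2 = n + 3 := by omega
  rw [this] at ea1
  have : n + 1 + 1 = n + 2 := by omega
  rw [this] at ea1
  have eb1 := hb (n + 1)
  have : n + 1 + 3 = n + 4 := by omega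
  rw [this] at eb1
  have : n + 1 + 2 = n + 3 := by omega
  rw [this] at eb1
  have : n + 1 + 1 = n + 2 := by omega
  rw [this] at eb1
  have ec1 := hc (n + 1)
  have : n + 1 + 3 = n + 4 := by omega
  rw [this] at ec1
  have : n + 1 + 2 = n + 3 := by omega
  rw [this] at ec1
  have : n + 1 + 1 = n + 2 := by omega
  rw [this] at ec1
  have ea0 := ha n
  have eb0 := hb n
  have ec0 := hc n
  rw [ea4, eb4, ec4, ea3, eb3, ec3, ea2, eb2, ec2, ea1, eb1, ec1, ea0, eb0, ec0]
  ring

theorem stmt14 (a b c : ℕ → ℤ)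
    (ha : ∀ n, a (n + 3) = 103683 * a (n + 2) - 103683 * a (n + 1) + a n)
    (hb : ∀ n, b (n + 3) = 103683 * b (n + 2) - 103683 * b (n + 1) + b n)
    (hc : ∀ n, c (n + 3) = 103683 * c (n + 2) - 103683 * c (n + 1) + c n)
    (ha0 : a 0 = -29) (ha1 : a 1 = -2117981) (ha2 : a 2 = -219595324061)
    (hb0 : b 0 = -1) (hb1 : b 1 = -654481) (hb2 : b 2 = -67858687009)
    (hc0 : c 0 = 25) (hc1 : c 1 = 1713481) (hc2 : c 2 = 177656349049) :
    ∀ n, a n ^ 3 + 2 * b n ^ 3 + 2 * c n ^ 3 = 6859 := by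
  have ha3 : a 3 = -22768082385992669 := by
    have h := ha 0
    norm_num [ha2, ha1, ha0] at h
    exact h
  have hb3 : b 3 = -7035724386600625 := by
    have h := hb 0
    norm_num [hb2, hb1, hb0] at h
    exact h
  have hc3 : c 3 = 18419765579596969 := by
    have h := hc 0
    norm_num [hc2, hc1, hc0] at h
    exact h
  have ha4 : a 4 = -2360640317724895401245 := by
    have h := ha 1
    norm_num [ha3, ha2, ha1] at h
    exact h
  have hb4 : b 4 = -729477975783668102209 := by
    have h := hb 1
    norm_num [hb3, hb2, hb1] at h
    exact h
  have hc4 : c 4 = 1909798134646115802841 := by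
    have h := hc 1
    norm_num [hc3, hc2, hc1] at h
    exact h
  have ha5 : a 5 = -244755909399584522604709469 := by
    have h := ha 2
    norm_num [ha4, ha3, ha2] at h
    exact h
  have hb5 : b 5 = -75633735478166551787420881 := by
    have h := hb 2
    norm_num [hb4, hb3, hb2] at h
    exact h
  have hc5 : c 5 = 198011690177958813089775625 := by
    have h := hc 2
    norm_num [hc4, hc3, hc2] at h
    exact h
  have ha6 : a 6 = -25376782196007082154976590581661 := by
    have h := ha 3
    norm_num [ha5, ha4, ha3] at h
    exact h
  have hb6 : b 6 = -7841856961117786446639704469601 := by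
    have h := hb 3
    norm_num [hb5, hb4, hb3] at h
    exact h
  have hc6 : c 6 = 20530248059121327524127999760441 := by
    have h := hc 3
    norm_num [hc5, hc4, hc3] at h
    exact h
  intro n
  induction n using Nat.strong_induction_on with
  | _ n ih =>
    rcases Nat.lt_or_ge n 7 with h | h
    · interval_cases n <;> norm_num [ha0, ha1, ha2, ha3, ha4, ha5, ha6, hb0, hb1, hb2, hb3, hb4, hb5, hb6, hc0, hc1, hc2, hc3, hc4, hc5, hc6]
    · obtain ⟨m, rfl⟩ : ∃ m, n = m + 7 := ⟨n - 7, by omega⟩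
      have k := key14 a b c ha hb hc m
      have h0 : a m ^ 3 + 2 * b m ^ 3 + 2 * c m ^ 3 = 6859 := ih m (by omega)
      have h1 : a (m + 1) ^ 3 + 2 * b (m + 1) ^ 3 + 2 * c (m + 1) ^ 3 = 6859 := ih (m + 1) (by omega)
      have h2 : a (m + 2) ^ 3 + 2 * b (m + 2) ^ 3 + 2 * c (m + 2) ^ 3 = 6859 := ih (m + 2) (by omega)
      have h3 : a (m + 3) ^ 3 + 2 * b (m + 3) ^ 3 + 2 * c (m + 3) ^ 3 = 6859 := ih (m + 3) (by omega)
      have h4 : a (m + 4) ^ 3 + 2 * b (m + 4) ^ 3 + 2 * c (m + 4) ^ 3 = 6859 := ih (m + 4) (by omega)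
      have h5 : a (m + 5) ^ 3 + 2 * b (m + 5) ^ 3 + 2 * c (m + 5) ^ 3 = 6859 := ih (m + 5) (by omega)
      have h6 : a (m + 6) ^ 3 + 2 * b (m + 6) ^ 3 + 2 * c (m + 6) ^ 3 = 6859 := ih (m + 6) (by omega)
      rw [h0, h1, h2, h3, h4, h5, h6] at k
      norm_num at k
      exact k
end

section
/- If sequences a, b, c : N -> Z all satisfy the recurrence u(n+3) = 103683*u(n+2) - 103683*u(n+1) + u(n), and a(n)^3 + 2*b(n)^3 + 2*c(n)^3 = 6859 holds for n = 0, 1, ..., 9, then it holds for all n. -/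
private lemma cube_rec (u : ℕ → ℤ)
    (hu : ∀ n, u (n + 3) = 103683 * u (n + 2) - 103683 * u (n + 1) + u n) (n : ℕ) :
    u (n + 7) ^ 3 =
      1114587804280327 * u (n + 6) ^ 3
      - 11981771105832231122419221 * u (n + 5) ^ 3
      + 1242293991679335809099081088035 * u (n + 4) ^ 3
      - 1242293991679335809099081088035 * u (n + 3) ^ 3
      + 11981771105832231122419221 * u (n + 2) ^ 3
      - 1114587804280327 * u (n + 1) ^ 3
      + u n ^ 3 := by
  have h3 : u (n + 3) = 103683 * u (n + 2) - 103683 * u (n + 1) + u n := hu n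
  have h4 : u (n + 4) = 103683 * u (n + 3) - 103683 * u (n + 2) + u (n + 1) := hu (n + 1)
  have h5 : u (n + 5) = 103683 * u (n + 4) - 103683 * u (n + 3) + u (n + 2) := hu (n + 2)
  have h6 : u (n + 6) = 103683 * u (n + 5) - 103683 * u (n + 4) + u (n + 3) := hu (n + 3)
  have h7 : u (n + 7) = 103683 * u (n + 6) - 103683 * u (n + 5) + u (n + 4) := hu (n + 4)
  rw [h7, h6, h5, h4, h3]
  ring

theorem stmt15 (a b c : ℕ → ℤ)
    (ha : ∀ n, a (n + 3) = 103683 * a (n + 2) - 103683 * a (n + 1) + a n)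
    (hb : ∀ n, b (n + 3) = 103683 * b (n + 2) - 103683 * b (n + 1) + b n)
    (hc : ∀ n, c (n + 3) = 103683 * c (n + 2) - 103683 * c (n + 1) + c n)
    (hcheck : ∀ n ≤ 9, a n ^ 3 + 2 * b n ^ 3 + 2 * c n ^ 3 = 6859) :
    ∀ n, a n ^ 3 + 2 * b n ^ 3 + 2 * c n ^ 3 = 6859 := by
  intro n
  induction n using Nat.strong_induction_on with
  | _ n ih =>
    rcases lt_or_ge n 7 with h | h
    · exact hcheck n (by omega)
    · obtain ⟨m, rfl⟩ : ∃ m, n = m + 7 := ⟨n - 7, by omega⟩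
      have Ka := cube_rec a ha m
      have Kb := cube_rec b hb m
      have Kc := cube_rec c hc m
      have e0 := ih m (by omega)
      have e1 := ih (m + 1) (by omega)
      have e2 := ih (m + 2) (by omega)
      have e3 := ih (m + 3) (by omega)
      have e4 := ih (m + 4) (by omega)
      have e5 := ih (m + 5) (by omega)
      have e6 := ih (m + 6) (by omega)
      rw [Ka, Kb, Kc]
      linarith [e0, e1, e2, e3, e4, e5, e6]
end

section
/- Let h : N -> Z satisfy h(0)=0, h(1)=1, h(n+2) = 9*h(n+1) + h(n), and set A = h(n+1), B = h(n). Then the integers a = A^2 + 7AB - 9B^2, b = 2A^2 - 4AB + 12B^2, c = 2A^2 + 10B^2 satisfy a^3 + b^3 = c^3 + (-1)^n for all n. -/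
theorem stmt19 (h : ℕ → ℤ) (h0 : h 0 = 0) (h1 : h 1 = 1)
    (hrec : ∀ n, h (n + 2) = 9 * h (n + 1) + h n) :
    ∀ n, (h (n+1)^2 + 7*h (n+1)*h n - 9*h n^2)^3
      + (2*h (n+1)^2 - 4*h (n+1)*h n + 12*h n^2)^3
      = (2*h (n+1)^2 + 10*h n^2)^3 + (-1)^n := by
  have key : ∀ n, h (n+1)^2 - 9 * h (n+1) * h n - h n ^ 2 = (-1)^n := by
    intro n
    induction n with
    | zero => simp [h0, h1]
    | succ k ih =>
      rw [hrec k, pow_succ]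
      ring_nf
      ring_nf at ih
      linarith
  intro n
  have k := key n
  have e : ((-1:ℤ)^n)^3 = (-1)^n := by
    rcases Nat.even_or_odd n with he | ho
    · simp [he.neg_one_pow]
    · simp [ho.neg_one_pow]
  linear_combination e + (((h (n+1)^2 - 9*h (n+1)*h n - h n^2)^2 +
    (h (n+1)^2 - 9*h (n+1)*h n - h n^2) * (-1)^n + ((-1)^n)^2)) * k
end
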